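/- Fix reals α, β with 0 ≤ α < 1 and β > 1. A word w : {1,…,n} → {0,…,ℓ} belongs to the language 𝓛 of Σ if and only if (a_1,…,a_{n−k+1}) ⪯ (w_k,…,w_n) ⪯ (b_1,…,b_{n−k+1}) for every k ∈ {1,…,n}, where ⪯ denotes the lexicographic order on finite words of equal length. -/

import Mathlib

noncomputable section

namespace IntermediateBeta

/-- The intermediate beta transformation `x ↦ βx + α mod 1`. -/
def F (α β : ℝ) (x : ℝ) : ℝ := Int.fract (β * x + α)

/-- The digit sequence of a point: `Om α β x n` is the index `i` with `F^[n] x ∈ J_i`.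
For `y ∈ [0,1)` we have `y ∈ J_i ↔ ⌊β y + α⌋ = i`. -/
def Om (α β : ℝ) (x : ℝ) : ℕ → ℕ := fun n => (⌊β * ((F α β)^[n] x) + α⌋).toNat

/-- `ℓ = ⌈α + β⌉ - 1`. -/
def ell (α β : ℝ) : ℕ := ⌈α + β⌉₊ - 1

/-- The subshift `Σ`: closure (in the product topology) of the set of digit sequences
of points of `[0,1)`. -/
def Sig (α β : ℝ) : Set (ℕ → ℕ) := closure (Om α β '' Set.Ico (0 : ℝ) 1)

/-- The shift map. -/
def shift (x : ℕ → ℕ) : ℕ → ℕ := fun n => x (n + 1)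

/-- Lexicographic order on one-sided sequences. -/
def lexLe (x y : ℕ → ℕ) : Prop := x = y ∨ ∃ k, (∀ i < k, x i = y i) ∧ x k < y k

/-- The language of a subset `S` of the full shift: the finite words occurring as
initial segments of elements of `S`. -/
def langOf (S : Set (ℕ → ℕ)) (w : List ℕ) : Prop :=
  ∃ x ∈ S, ∀ i : Fin w.length, x i = w.get i

/-- Membership in the language `𝓛` of the subshift `Σ`. -/
def inLang (α β : ℝ) (w : List ℕ) : Prop := langOf (Sig α β) w

/-- The tail segment of `w` of length `k` agrees with the initial segment of `s`
of length `k`. -/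
def tailAgrees (s : ℕ → ℕ) (w : List ℕ) (k : ℕ) : Prop :=
  k ≤ w.length ∧ ∀ i < k, w.getD (w.length - k + i) 0 = s i

/-- `kmax s w` is the length of the longest tail segment of `w` agreeing with an
initial segment of `s` (`k₁(w)` when `s = a`, `k₂(w)` when `s = b`). -/
def kmax (s : ℕ → ℕ) (w : List ℕ) : ℕ := sSup {k | tailAgrees s w k}

/-- `D a b` is the set of lengths `n` such that the initial segment of `b` of
length `n` occurs somewhere in `a`.  Thus `D a b` is the set `𝖣(a)` of the paper
and `D b a` is `𝖣(b)`. -/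
def D (a b : ℕ → ℕ) : Set ℕ := {n | ∃ j, ∀ i < n, b i = a (j + i)}

/-- Gluing of the words `w 0, v 0, w 1, v 1, …, v (n-1), w n`. -/
def glue {n : ℕ} (w : Fin (n + 1) → List ℕ) (v : Fin n → List ℕ) : List ℕ :=
  (List.ofFn fun i : Fin n => w i.castSucc ++ v i).flatten ++ w (Fin.last n)

/-- A collection `G` of words inside the language `lang` has specification: there
is `τ ∈ ℕ` such that any finite list of words of `G` can be glued, with gluing
words from `lang` of length `τ`, into a word of `lang`. -/
def HasSpec (lang G : List ℕ → Prop) : Prop :=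
  ∃ τ : ℕ, 1 ≤ τ ∧ ∀ n : ℕ, ∀ w : Fin (n + 1) → List ℕ, (∀ i, G (w i)) →
    ∃ v : Fin n → List ℕ, (∀ i, (v i).length = τ ∧ lang (v i)) ∧ lang (glue w v)

/-- The initial segment of a sequence, as a finite word. -/
def pre (s : ℕ → ℕ) (n : ℕ) : List ℕ := List.ofFn fun i : Fin n => s i

/-- Lexicographic order for finite words (of equal length). -/
def wordLe (u v : List ℕ) : Prop :=
  u = v ∨ ∃ k, (∀ i < k, u.getD i 0 = v.getD i 0) ∧ u.getD k 0 < v.getD k 0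

/-- Concatenation of a finite word with an infinite sequence. -/
def wcat (w : List ℕ) (x : ℕ → ℕ) : ℕ → ℕ := fun n =>
  if h : n < w.length then w.get ⟨n, h⟩ else x (n - w.length)

open Filter Topology Set

/-!
The coding `x ↦ Ω(x)` is lexicographically monotone, so necessity follows from
`a = Ω(0) ⪯ Ω(F^k x) ⪯ b`. For sufficiency take the supremum `X` of the points whose coding
is `⪯ w` on the first `n = |w|` digits. Finite codings are right-continuous, so `X` itself
does not qualify, and they have left limits: at `X` the left limit is either `Ω(X)`, or, when
some `β F^j(X) + α` is an integer, it reads `u c b₁ b₂ …` while `Ω(X)` reads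
`u (c+1) a₁ a₂ …`. The constraints at position `|u| + 1` squeeze `w` onto one of these two
words, and `w ≺ Ω(X)` leaves the left limit, which is the coding of points just left of `X`
(for `X = 1` the left limit is `b` itself).
-/

section LexOrder

variable {α : Type*} [LinearOrder α]

theorem cons_le_cons_iff {a b : α} {l m : List α} :
    a :: l ≤ b :: m ↔ a < b ∨ a = b ∧ l ≤ m := by
  rw [le_iff_lt_or_eq, le_iff_lt_or_eq, List.cons_lt_cons_iff, List.cons_eq_cons]
  tauto

theorem eq_or_eq_of_covBy {u p q w : List α} {c c' : α} (hc : c ⋖ c')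
    (hlo : u ++ c :: p ≤ w) (hhi : w ≤ u ++ c' :: q)
    (hq : q ≤ w.drop (u.length + 1)) (hp : w.drop (u.length + 1) ≤ p) :
    w = u ++ c :: p ∨ w = u ++ c' :: q := by
  induction u generalizing w with
  | nil =>
    obtain _ | ⟨d, r⟩ := w
    · exact absurd hlo (List.nil_lt_cons c p).not_ge
    simp only [List.nil_append, List.length_nil, zero_add, List.drop_succ_cons,
      List.drop_zero, List.cons.injEq] at *
    rcases cons_le_cons_iff.1 hlo with hcd | ⟨rfl, hpr⟩
    · rcases cons_le_cons_iff.1 hhi with hdc' | ⟨rfl, hrq⟩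
      · exact absurd hdc' (hc.2 hcd)
      · exact Or.inr ⟨rfl, le_antisymm hrq hq⟩
    · exact Or.inl ⟨rfl, le_antisymm hp hpr⟩
  | cons e u ih =>
    obtain _ | ⟨d, r⟩ := w
    · exact absurd hlo (List.nil_lt_cons _ _).not_ge
    simp only [List.cons_append, List.length_cons, List.drop_succ_cons, List.cons.injEq] at *
    rcases cons_le_cons_iff.1 hlo with hed | ⟨rfl, hur⟩
    · rcases cons_le_cons_iff.1 hhi with hde | ⟨rfl, -⟩
      · exact absurd hde hed.not_gt
      · exact absurd hed (lt_irrefl _)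
    rcases cons_le_cons_iff.1 hhi with hde | ⟨-, hru⟩
    · exact absurd hde (lt_irrefl _)
    exact (ih hur hru hq hp).imp (⟨rfl, ·⟩) (⟨rfl, ·⟩)

end LexOrder

section Prefixes

theorem wordLe_iff_le {u v : List ℕ} (h : u.length = v.length) : wordLe u v ↔ u ≤ v := by
  rw [wordLe, le_iff_lt_or_eq, or_comm, List.lt_iff_exists]
  simp only [h, lt_irrefl, and_false, false_or]
  refine or_congr_left ⟨fun ⟨k, hk, hlt⟩ => ?_, fun ⟨k, hku, hkv, hk, hlt⟩ => ?_⟩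
  · have hkv : k < v.length := by
      by_contra hkv
      rw [List.getD_eq_default _ _ (by omega), List.getD_eq_default _ _ (by omega)] at hlt
      exact lt_irrefl 0 hlt
    refine ⟨k, hkv, hkv, fun j hj => ?_, ?_⟩
    · simpa only [List.getD_eq_getElem _ _ (hj.trans (h ▸ hkv)),
        List.getD_eq_getElem _ _ (hj.trans hkv)] using hk j hj
    · simpa only [List.getD_eq_getElem _ _ (h ▸ hkv), List.getD_eq_getElem _ _ hkv] using hlt
  · refine ⟨k, fun j hj => ?_, ?_⟩
    · simpa only [List.getD_eq_getElem u 0 (show j < u.length by omega),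
        List.getD_eq_getElem _ _ (hj.trans hkv)] using hk j hj
    · simpa only [List.getD_eq_getElem u 0 (show k < u.length by omega),
        List.getD_eq_getElem _ _ hkv] using hlt

@[simp]
theorem length_pre (s : ℕ → ℕ) (n : ℕ) : (pre s n).length = n := List.length_ofFn

theorem pre_succ (s : ℕ → ℕ) (n : ℕ) : pre s (n + 1) = s 0 :: pre (fun i => s (i + 1)) n :=
  List.ofFn_succ

theorem drop_pre (s : ℕ → ℕ) (n k : ℕ) :
    (pre s n).drop k = pre (fun i => s (k + i)) (n - k) := by
  apply List.ext_getElem <;> simp [pre]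

theorem pre_eq_iff {s : ℕ → ℕ} {w : List ℕ} :
    pre s w.length = w ↔ ∀ i : Fin w.length, s i = w.get i := by
  calc pre s w.length = w ↔ pre s w.length = List.ofFn w.get := by rw [List.ofFn_get]
    _ ↔ _ := List.ofFn_inj.trans funext_iff

theorem pre_le_pre_of_lexLe {s t : ℕ → ℕ} (h : lexLe s t) (n : ℕ) :
    pre s n ≤ pre t n := by
  induction n generalizing s t with
  | zero => exact le_rfl
  | succ n ih =>
    rw [pre_succ, pre_succ]
    rcases h with rfl | ⟨_ | k, hk, hlt⟩
    · exact le_rfl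
    · exact (List.cons_lt_cons_iff.2 (Or.inl hlt)).le
    · rw [hk 0 k.succ_pos]
      exact List.cons_le_cons _ (ih (Or.inr ⟨k, fun i hi => hk (i + 1) (by omega), hlt⟩))

theorem isOpen_setOf_pre_eq (n : ℕ) (w : List ℕ) : IsOpen {s : ℕ → ℕ | pre s n = w} :=
  (isOpen_discrete {v : Fin n → ℕ | List.ofFn v = w}).preimage
    (continuous_pi fun i => continuous_apply (i : ℕ) :
      Continuous fun (s : ℕ → ℕ) (i : Fin n) => s i)

end Prefixes

section Coding

variable {α β : ℝ}

theorem F_mem_Ico (α β x : ℝ) : F α β x ∈ Ico (0 : ℝ) 1 :=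
  ⟨Int.fract_nonneg _, Int.fract_lt_one _⟩

theorem iterate_F_mem_Ico (α β : ℝ) {x : ℝ} (hx : x ∈ Ico (0 : ℝ) 1) (k : ℕ) :
    (F α β)^[k] x ∈ Ico (0 : ℝ) 1 := by
  cases k with
  | zero => exact hx
  | succ k => rw [Function.iterate_succ_apply']; exact F_mem_Ico α β _

theorem Om_add (x : ℝ) (k i : ℕ) : Om α β x (k + i) = Om α β ((F α β)^[k] x) i := by
  rw [Om, Om, add_comm k i, Function.iterate_add_apply]

theorem pre_Om_succ (x : ℝ) (n : ℕ) :
    pre (Om α β x) (n + 1) = ⌊β * x + α⌋.toNat :: pre (Om α β (F α β x)) n := by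
  simp_rw [pre_succ, add_comm _ 1, Om_add]
  rfl

theorem drop_pre_Om (x : ℝ) (n k : ℕ) :
    (pre (Om α β x) n).drop k = pre (Om α β ((F α β)^[k] x)) (n - k) := by
  simp_rw [drop_pre, Om_add]

theorem pre_Om_mono (hα : 0 ≤ α) (hβ : 0 < β) {x y : ℝ} (hx : 0 ≤ x) (hxy : x ≤ y)
    (n : ℕ) :
    pre (Om α β x) n ≤ pre (Om α β y) n := by
  induction n generalizing x y with
  | zero => exact le_rfl
  | succ n ih =>
    rw [pre_Om_succ, pre_Om_succ]
    have hfloor : ⌊β * x + α⌋ ≤ ⌊β * y + α⌋ := Int.floor_le_floor (by gcongr)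
    have hfloor0 : 0 ≤ ⌊β * x + α⌋ := Int.floor_nonneg.2 (by positivity)
    rcases hfloor.lt_or_eq with hlt | heq
    · exact (List.cons_lt_cons_iff.2 (Or.inl (by omega))).le
    · rw [heq]
      refine List.cons_le_cons _ (ih (F_mem_Ico α β x).1 ?_)
      rw [F, F, Int.fract, Int.fract, heq]
      gcongr

theorem eventually_pre_Om_nhdsGE (hβ : 0 < β) (x : ℝ) (n : ℕ) :
    ∀ᶠ y in 𝓝[≥] x, pre (Om α β y) n = pre (Om α β x) n := by
  induction n generalizing x with
  | zero => exact Eventually.of_forall fun _ => rfl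
  | succ n ih =>
    set c := ⌊β * x + α⌋
    have hfloor : ∀ᶠ y in 𝓝[≥] x, ⌊β * y + α⌋ = c := by
      refine tendsto_pure.1 ((tendsto_floor_right_pure_floor _).comp ?_)
      exact (by fun_prop : Continuous fun y => β * y + α).continuousWithinAt.tendsto_nhdsWithin
        fun y (hy : x ≤ y) => show β * x + α ≤ β * y + α by gcongr
    have hF : Tendsto (F α β) (𝓝[≥] x) (𝓝[≥] (F α β x)) := by
      refine Tendsto.congr' (hfloor.mono fun y hy => by rw [F, Int.fract, hy])
        ((by fun_prop : Continuous fun y => β * y + α - c).continuousWithinAt.tendsto_nhdsWithin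
          fun y (hy : x ≤ y) => show F α β x ≤ β * y + α - c by rw [F, Int.fract]; gcongr)
    filter_upwards [hfloor, hF.eventually (ih (F α β x))] with y h0 h1
    rw [pre_Om_succ, pre_Om_succ, h0, h1]

theorem exists_eventually_pre_Om_nhdsLT (hα : 0 ≤ α) (hβ : 0 < β) {b : ℕ → ℕ}
    (hb : ∀ n, ∀ᶠ y in 𝓝[<] 1, pre (Om α β y) n = pre b n) {X : ℝ} (hX : 0 < X)
    (n : ℕ) :
    ∃ L, (∀ᶠ y in 𝓝[<] X, pre (Om α β y) n = L) ∧
      (L = pre (Om α β X) n ∨ ∃ u c m, L = u ++ c :: pre b m ∧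
        pre (Om α β X) n = u ++ (c + 1) :: pre (Om α β 0) m) := by
  induction n generalizing X with
  | zero => exact ⟨[], Eventually.of_forall fun _ => rfl, Or.inl rfl⟩
  | succ n ih =>
    set t := β * X + α
    set c : ℤ := ⌈t⌉ - 1
    have hct : c < t := by
      simp only [c, Int.cast_sub, Int.cast_one]; linarith [Int.ceil_lt_add_one t]
    have htc : t ≤ c + 1 := by
      simp only [c, Int.cast_sub, Int.cast_one, sub_add_cancel]; exact Int.le_ceil t
    have hlt : ∀ y < X, β * y + α < t := fun y hy => by simp only [t]; gcongr
    have hfloor : ∀ᶠ y in 𝓝[<] X, ⌊β * y + α⌋ = c := by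
      refine tendsto_pure.1 ((tendsto_floor_left_pure_ceil_sub_one t).comp ?_)
      exact (by fun_prop : Continuous fun y => β * y + α).continuousWithinAt.tendsto_nhdsWithin
        hlt
    have hF : Tendsto (F α β) (𝓝[<] X) (𝓝[<] (t - c)) := by
      refine Tendsto.congr' (hfloor.mono fun y hy => by rw [F, Int.fract, hy])
        ((by fun_prop : Continuous fun y => β * y + α - c).continuousWithinAt.tendsto_nhdsWithin
          fun y (hy : y < X) => sub_lt_sub_right (hlt y hy) _)
    obtain ⟨L, hL, hjump⟩ := ih (sub_pos.2 hct)
    refine ⟨c.toNat :: L, ?_, ?_⟩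
    · filter_upwards [hfloor, hF.eventually hL] with y h0 h1
      rw [pre_Om_succ, h0, h1]
    rcases htc.lt_or_eq with htc | htc
    · have hfl : ⌊t⌋ = c := Int.floor_eq_iff.2 ⟨hct.le, htc⟩
      have hFX : F α β X = t - c := by rw [F, Int.fract, hfl]
      rw [pre_Om_succ, hfl, hFX]
      rcases hjump with rfl | ⟨u, d, m, hLu, hXu⟩
      · exact Or.inl rfl
      · exact Or.inr ⟨c.toNat :: u, d, m, by rw [hLu]; rfl, by rw [hXu]; rfl⟩
    · -- `β X + α` is an integer: `F X = 0`, while `F y → 1` as `y → X⁻`.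
      have hfl : ⌊t⌋ = c + 1 := by rw [htc]; exact_mod_cast Int.floor_intCast (c + 1)
      have hFX : F α β X = 0 := by rw [F, Int.fract, hfl]; push_cast; linarith
      have hc : 0 ≤ c := by have := Int.ceil_pos.2 (show 0 < t by positivity); omega
      rw [htc, add_sub_cancel_left] at hL
      obtain ⟨y, hyL, hyb⟩ := (hL.and (hb n)).exists
      refine Or.inr ⟨[], c.toNat, n, by rw [← hyL, hyb]; rfl, ?_⟩
      rw [pre_Om_succ, hfl, hFX]
      simp only [List.nil_append, List.cons.injEq, and_true]
      omega

theorem exists_mem_Ico_pre_Om_eq {s : ℕ → ℕ} (hs : s ∈ Sig α β) (n : ℕ) :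
    ∃ x ∈ Ico (0 : ℝ) 1, pre (Om α β x) n = pre s n := by
  obtain ⟨_, hx, x, hxI, rfl⟩ := mem_closure_iff.1 hs _ (isOpen_setOf_pre_eq n (pre s n)) rfl
  exact ⟨x, hxI, hx⟩

theorem inLang_iff {w : List ℕ} :
    inLang α β w ↔ ∃ x ∈ Ico (0 : ℝ) 1, pre (Om α β x) w.length = w := by
  refine ⟨fun ⟨s, hs, hsw⟩ => ?_, fun ⟨x, hx, hxw⟩ =>
    ⟨Om α β x, subset_closure ⟨x, hx, rfl⟩, pre_eq_iff.1 hxw⟩⟩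
  obtain ⟨x, hx, hxs⟩ := exists_mem_Ico_pre_Om_eq hs w.length
  exact ⟨x, hx, hxs.trans (pre_eq_iff.2 hsw)⟩

theorem eventually_pre_Om_nhdsLT_one (hα : 0 ≤ α) (hβ : 0 < β) {b : ℕ → ℕ}
    (hb : b ∈ Sig α β) (hbsup : ∀ y ∈ Sig α β, lexLe y b) (n : ℕ) :
    ∀ᶠ y in 𝓝[<] 1, pre (Om α β y) n = pre b n := by
  obtain ⟨x, hx, hxb⟩ := exists_mem_Ico_pre_Om_eq hb n
  filter_upwards [Ioo_mem_nhdsLT hx.2] with y hy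
  have hyI : y ∈ Ico (0 : ℝ) 1 := ⟨hx.1.trans hy.1.le, hy.2⟩
  exact le_antisymm (pre_le_pre_of_lexLe (hbsup _ (subset_closure ⟨y, hyI, rfl⟩)) n)
    (hxb ▸ pre_Om_mono hα hβ hx.1 hy.1.le n)

theorem exists_pre_Om_eq_of_lex_bounds (hα : 0 ≤ α) (hβ : 0 < β) {b : ℕ → ℕ}
    (hb : ∀ n, ∀ᶠ y in 𝓝[<] 1, pre (Om α β y) n = pre b n) {w : List ℕ}
    (hw : ∀ k, pre (Om α β 0) (w.length - k) ≤ w.drop k ∧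
      w.drop k ≤ pre b (w.length - k)) :
    ∃ x ∈ Ico (0 : ℝ) 1, pre (Om α β x) w.length = w := by
  set n := w.length
  set A := {x ∈ Ico (0 : ℝ) 1 | pre (Om α β x) n ≤ w}
  have h0A : (0 : ℝ) ∈ A := ⟨left_mem_Ico.2 one_pos, by simpa using (hw 0).1⟩
  obtain ⟨X, hXlub⟩ : ∃ X, IsLUB A X :=
    ⟨sSup A, isLUB_csSup ⟨0, h0A⟩ ⟨1, fun x hx => hx.1.2.le⟩⟩
  have hXA : X ∉ A := by
    intro hXA
    have hR := (eventually_pre_Om_nhdsGE (α := α) hβ X n).filter_mono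
      (nhdsWithin_mono _ Ioi_subset_Ici_self)
    obtain ⟨y, hyX, hy⟩ := (hR.and (Ioo_mem_nhdsGT hXA.1.2)).exists
    exact (hXlub.1 ⟨⟨hXA.1.1.trans hy.1.le, hy.2⟩, hyX ▸ hXA.2⟩).not_gt hy.1
  have hX0 : 0 < X := (hXlub.1 h0A).lt_of_ne (ne_of_mem_of_not_mem h0A hXA)
  obtain ⟨L, hL, hjump⟩ := exists_eventually_pre_Om_nhdsLT hα hβ hb hX0 n
  obtain ⟨x₀, hx₀X, hx₀⟩ := mem_nhdsLT_iff_exists_Ioo_subset.1 hL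
  obtain ⟨y, hyA, hx₀y, hyX⟩ := hXlub.exists_between hx₀X
  have hyL : pre (Om α β y) n = L :=
    hx₀ ⟨hx₀y, hyX.lt_of_ne (ne_of_mem_of_not_mem hyA hXA)⟩
  have hLw : L ≤ w := hyL ▸ hyA.2
  refine ⟨y, hyA.1, le_antisymm hyA.2 (hyL ▸ ?_)⟩
  rcases (hXlub.2 fun x hx => hx.1.2.le).lt_or_eq with hX1 | hX1
  · have hwX : w < pre (Om α β X) n := not_le.1 fun h => hXA ⟨⟨hX0.le, hX1⟩, h⟩
    rcases hjump with hLX | ⟨u, c, m, hLu, hXu⟩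
    · exact absurd (hLw.trans_lt hwX) (hLX ▸ lt_irrefl L)
    have hm : n - (u.length + 1) = m := by
      have := congrArg List.length hXu
      simp only [length_pre, List.length_append, List.length_cons] at this
      omega
    obtain ⟨hlo, hhi⟩ := hm ▸ hw (u.length + 1)
    rcases eq_or_eq_of_covBy (Order.covBy_add_one c) (hLu ▸ hLw) (hXu ▸ hwX.le) hlo hhi
      with h | h
    · exact (h.trans hLu.symm).le
    · exact absurd hwX (h.trans hXu.symm ▸ lt_irrefl w)
  · rw [hX1] at hL
    obtain ⟨z, hzL, hzb⟩ := (hL.and (hb n)).exists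
    simpa [← hzL, hzb] using (hw 0).2

end Coding

theorem mem_lang_iff_lex_general (α β : ℝ) (hα0 : 0 ≤ α) (hβ : 1 < β)
    (b : ℕ → ℕ) (hb : b ∈ Sig α β) (hbsup : ∀ y ∈ Sig α β, lexLe y b)
    (w : List ℕ) :
    inLang α β w ↔
      ∀ k < w.length,
        wordLe (pre (Om α β 0) (w.length - k)) (w.drop k) ∧
        wordLe (w.drop k) (pre b (w.length - k)) := by
  have hβ0 : 0 < β := by linarith
  have hle : ∀ k, (wordLe (pre (Om α β 0) (w.length - k)) (w.drop k) ∧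
      wordLe (w.drop k) (pre b (w.length - k))) ↔
      (pre (Om α β 0) (w.length - k) ≤ w.drop k ∧ w.drop k ≤ pre b (w.length - k)) :=
    fun k => and_congr (wordLe_iff_le (by simp)) (wordLe_iff_le (by simp))
  simp only [hle, inLang_iff]
  constructor
  · rintro ⟨x, hx, hxw⟩ k -
    have hxk := iterate_F_mem_Ico α β hx k
    rw [← hxw, drop_pre_Om, length_pre]
    exact ⟨pre_Om_mono hα0 hβ0 le_rfl hxk.1 _,
      pre_le_pre_of_lexLe (hbsup _ (subset_closure ⟨_, hxk, rfl⟩)) _⟩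
  · intro h
    refine exists_pre_Om_eq_of_lex_bounds hα0 hβ0
      (eventually_pre_Om_nhdsLT_one hα0 hβ0 hb hbsup) fun k => ?_
    rcases lt_or_ge k w.length with hk | hk
    · exact h k hk
    · rw [List.drop_eq_nil_of_le hk, Nat.sub_eq_zero_of_le hk]
      exact ⟨le_rfl, le_rfl⟩

/-- **Corollary (lexicographic description of the language).** For `0 ≤ α < 1` and
`β > 1`, a word `w` over `{0,…,ℓ}` belongs to `𝓛` if and only if
`(a_1,…,a_{n-k+1}) ⪯ (w_k,…,w_n) ⪯ (b_1,…,b_{n-k+1})` for every `k ∈ {1,…,n}`. -/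
theorem mem_lang_iff_lex (α β : ℝ) (hα0 : 0 ≤ α) (hα1 : α < 1) (hβ : 1 < β)
    (b : ℕ → ℕ) (hb : b ∈ Sig α β) (hbsup : ∀ y ∈ Sig α β, lexLe y b)
    (w : List ℕ) (hw : ∀ c ∈ w, c ≤ ell α β) :
    inLang α β w ↔
      ∀ k < w.length,
        wordLe (pre (Om α β 0) (w.length - k)) (w.drop k) ∧
        wordLe (w.drop k) (pre b (w.length - k)) :=
  mem_lang_iff_lex_general α β hα0 hβ b hb hbsup w

end IntermediateBeta
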